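/- Applying the Reverse Rejecting (RR) rule to the preferential categories C_p only, and then allocating the q_{c_u} unreserved units among the agents left unmatched by the RR rule in order of the baseline ordering ≻_π from highest priority, yields a maximum beneficiary assignment: the resulting matching maximizes the number of agents matched to preferential categories among all matchings complying with the eligibility requirements. -/

import Mathlib

open scoped Classical

/-- An instance of the rationing problem: a quota for every category and, for every
category `c`, a priority ranking `≿_c`: a total preorder on `N ∪ {∅}`, where we model
`N ∪ {∅}` as `Option N` with `none` playing the role of `∅`. -/
structure Inst (N C : Type*) where
  quota : C → ℕ
  prio : C → Option N → Option N → Prop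
  total : ∀ c x y, prio c x y ∨ prio c y x
  trans : ∀ c x y z, prio c x y → prio c y z → prio c x z

namespace Inst

variable {N C : Type*}

/-- The strict part `≻_c` of the priority ranking `≿_c`. -/
def Strict (I : Inst N C) (c : C) (x y : Option N) : Prop :=
  I.prio c x y ∧ ¬ I.prio c y x

/-- Agent `i` is eligible for category `c` if `i ≻_c ∅`. -/
def Eligible (I : Inst N C) (i : N) (c : C) : Prop :=
  I.Strict c (some i) none

end Inst

variable {N C : Type*} [Fintype N] [DecidableEq N] [DecidableEq C]

/-- The number of matched agents of (the function) `μ`. -/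
def msize (μ : N → Option C) : ℕ :=
  (Finset.univ.filter fun i => μ i ≠ none).card

/-- `μ` satisfies the capacity constraints: every category `c` is matched
to at most `quota c` agents. -/
def Inst.IsMatching (I : Inst N C) (μ : N → Option C) : Prop :=
  ∀ c, (Finset.univ.filter fun i => μ i = some c).card ≤ I.quota c

/-- A baseline ordering `≻_π`, given as a duplicate-free list of all agents,
listed from highest priority to lowest priority; so `i ≻_π j` iff
`order.indexOf i < order.indexOf j`. -/
def IsBaseline (order : List N) : Prop :=
  order.Nodup ∧ ∀ i : N, i ∈ order

/-- `μ` complies with the eligibility requirements. -/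
def Complies (I : Inst N C) (μ : N → Option C) : Prop :=
  ∀ (i : N) (c : C), μ i = some c → I.Eligible i c

/-- The number of agents matched to a preferential category (a category other than the
unreserved category `cu`). -/
def beneCount (cu : C) (μ : N → Option C) : ℕ :=
  (Finset.univ.filter fun i => μ i ≠ none ∧ μ i ≠ some cu).card

/-- `μ` is a matching of the reduced reservation graph of the instance restricted to the
preferential categories `C_p = C \ {cu}`, with rejected set `R`: it satisfies the capacity
constraints, matches agents only to preferential categories they are eligible for, leaves
the agents of `R` unmatched, and uses no edge `{i,c}` with `j ≻_c i` for some `j ∈ R`. -/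
def PMatch1 (I : Inst N C) (cu : C) (R : Finset N) (μ : N → Option C) : Prop :=
  I.IsMatching μ ∧ (∀ i ∈ R, μ i = none) ∧
    ∀ (i : N) (c : C), μ i = some c →
      c ≠ cu ∧ I.Eligible i c ∧ ∀ j ∈ R, ¬ I.Strict c (some j) (some i)

/-- The size of a maximum size matching of the reduced reservation graph restricted to the
preferential categories. -/
noncomputable def ms1 (I : Inst N C) (cu : C) (R : Finset N) : ℕ :=
  sSup {k | ∃ μ : N → Option C, PMatch1 I cu R μ ∧ msize μ = k}

/-- The rejected set of the RR rule applied to the preferential categories only, processing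
the agents in order of the baseline ordering from lowest to highest priority. -/
noncomputable def rrRej1 (I : Inst N C) (cu : C) (order : List N) : Finset N :=
  order.foldr
    (fun i R => if ms1 I cu (insert i R) = ms1 I cu (∅ : Finset N) then insert i R else R) ∅

/-- Allocating the `q_{c_u}` unreserved units among the agents left unmatched by `μP` in
order of the baseline ordering from highest priority. -/
noncomputable def fillUnreserved (I : Inst N C) (cu : C) (order : List N)
    (μP : N → Option C) : N → Option C := fun i =>
  match μP i with
  | some c => some c
  | none =>
    if (Finset.univ.filter fun j => μP j = none ∧ order.idxOf j < order.idxOf i).card <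
        I.quota cu then
      some cu
    else none

/-! The RR rule rejects an agent only when doing so keeps the maximum matching size of the
reduced reservation graph equal to that of the full one, so `μP` is a maximum matching of the
reservation graph on the preferential categories. Every complying matching, stripped of its
unreserved seats, is a matching of that graph, hence has at most `msize μP` beneficiaries.
Filling the unreserved seats touches only agents unmatched by `μP`, and it respects the quota
of `cu` because the agents it seats have pairwise distinct ranks below `quota cu` among the
unmatched agents. -/

open Finset

section Rank

variable {α β : Type*} [Fintype α] [LinearOrder β] {p : α → Prop} [DecidablePred p]
  {key : α → β}

lemma card_filter_and_lt_lt_of_lt {i i' : α} (hi : p i) (h : key i < key i') :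
    #{j | p j ∧ key j < key i} < #{j | p j ∧ key j < key i'} := by
  refine card_lt_card ((ssubset_iff_of_subset fun j hj => ?_).2 ⟨i, ?_, ?_⟩)
  · simp only [mem_filter, mem_univ, true_and] at hj ⊢
    exact ⟨hj.1, hj.2.trans h⟩
  · simpa using ⟨hi, h⟩
  · simp

lemma card_le_of_forall_card_filter_and_lt_lt (hkey : Set.InjOn key {i | p i})
    {t : Finset α} {q : ℕ} (ht : ∀ i ∈ t, p i ∧ #{j | p j ∧ key j < key i} < q) :
    #t ≤ q := by
  have hinj : Set.InjOn (fun i => #{j | p j ∧ key j < key i}) t := by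
    intro i hi i' hi' heq
    by_contra hne
    rcases lt_or_gt_of_ne (hkey.ne (ht i hi).1 (ht i' hi').1 hne) with hlt | hlt
    · exact (card_filter_and_lt_lt_of_lt (ht i hi).1 hlt).ne heq
    · exact (card_filter_and_lt_lt_of_lt (ht i' hi').1 hlt).ne heq.symm
  simpa using card_le_card_of_injOn _ (fun i hi => mem_range.2 (ht i hi).2) hinj

end Rank

section Preferential

variable {N C : Type*} [Fintype N] [DecidableEq C] {I : Inst N C} {cu : C}

lemma PMatch1.ne_cu {R : Finset N} {μ : N → Option C} (h : PMatch1 I cu R μ) (i : N) :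
    μ i ≠ some cu :=
  fun hi => (h.2.2 i cu hi).1 rfl

lemma PMatch1.complies {R : Finset N} {μ : N → Option C} (h : PMatch1 I cu R μ) :
    Complies I μ :=
  fun i c hi => (h.2.2 i c hi).2.1

lemma le_ms1 {R : Finset N} {μ : N → Option C} (h : PMatch1 I cu R μ) :
    msize μ ≤ ms1 I cu R :=
  le_csSup ⟨Fintype.card N, by rintro k ⟨ν, -, rfl⟩; exact card_filter_le _ _⟩ ⟨μ, h, rfl⟩

def dropUnreserved (cu : C) (ν : N → Option C) : N → Option C :=
  fun i => if ν i = some cu then none else ν i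

lemma msize_dropUnreserved (ν : N → Option C) :
    msize (dropUnreserved cu ν) = beneCount cu ν := by
  unfold msize beneCount dropUnreserved
  congr 1
  ext i
  by_cases hi : ν i = some cu <;> simp [hi]

lemma pMatch1_empty_dropUnreserved {ν : N → Option C} (hν : I.IsMatching ν)
    (hνc : Complies I ν) : PMatch1 I cu ∅ (dropUnreserved cu ν) := by
  have hsome : ∀ i c, dropUnreserved cu ν i = some c → ν i = some c ∧ c ≠ cu := by
    intro i c h
    unfold dropUnreserved at h
    split_ifs at h with hi
    exact ⟨h, by rintro rfl; exact hi h⟩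
  refine ⟨fun c => (card_le_card fun i hi => ?_).trans (hν c), by simp, fun i c h => ?_⟩
  · simp only [mem_filter, mem_univ, true_and] at hi ⊢
    exact (hsome i c hi).1
  · obtain ⟨hi, hc⟩ := hsome i c h
    exact ⟨hc, hνc i c hi, by simp⟩

lemma beneCount_le_ms1 {ν : N → Option C} (hν : I.IsMatching ν) (hνc : Complies I ν) :
    beneCount cu ν ≤ ms1 I cu ∅ :=
  msize_dropUnreserved (cu := cu) ν ▸ le_ms1 (pMatch1_empty_dropUnreserved hν hνc)

variable [DecidableEq N]

lemma ms1_rrRej1 (I : Inst N C) (cu : C) (order : List N) :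
    ms1 I cu (rrRej1 I cu order) = ms1 I cu ∅ := by
  unfold rrRej1
  induction order with
  | nil => rfl
  | cons i l ih =>
    rw [List.foldr_cons]
    split_ifs with h
    · exact h
    · exact ih

end Preferential

section Fill

variable {N C : Type*} [Fintype N] [DecidableEq N] {I : Inst N C} {cu : C}
  {order : List N} {μP : N → Option C}

lemma fillUnreserved_of_some {i : N} {c : C} (h : μP i = some c) :
    fillUnreserved I cu order μP i = some c := by
  simp [fillUnreserved, h]

lemma fillUnreserved_of_none {i : N} (h : μP i = none) :
    fillUnreserved I cu order μP i = some cu ∨ fillUnreserved I cu order μP i = none := by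
  unfold fillUnreserved
  split_ifs <;> simp [h]

lemma fillUnreserved_eq_some_iff {i : N} {c : C} (hc : c ≠ cu) :
    fillUnreserved I cu order μP i = some c ↔ μP i = some c := by
  refine ⟨fun hf => ?_, fillUnreserved_of_some⟩
  rcases h : μP i with _ | c'
  · rcases fillUnreserved_of_none (I := I) (order := order) h with h' | h' <;> rw [h'] at hf
    · exact absurd (Option.some_inj.1 hf).symm hc
    · exact absurd hf (by simp)
  · rw [← hf, fillUnreserved_of_some h]

lemma fillUnreserved_eq_some_cu_iff (hcu : ∀ i, μP i ≠ some cu) {i : N} :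
    fillUnreserved I cu order μP i = some cu ↔
      μP i = none ∧
        #{j | μP j = none ∧ order.idxOf j < order.idxOf i} < I.quota cu := by
  rcases h : μP i with _ | c
  · unfold fillUnreserved
    split_ifs with hlt <;> simp [h, hlt]
  · have hc : c ≠ cu := fun hc => hcu i (h.trans (congrArg some hc))
    simp [fillUnreserved_of_some h, hc]

lemma complies_fillUnreserved (hcuE : ∀ i, I.Eligible i cu) (hμP : Complies I μP) :
    Complies I (fillUnreserved I cu order μP) := by
  intro i c hf
  by_cases hc : c = cu
  · exact hc ▸ hcuE i
  · exact hμP i c ((fillUnreserved_eq_some_iff hc).1 hf)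

variable [DecidableEq C]

lemma isMatching_fillUnreserved (hmem : ∀ i, i ∈ order) (hμP : I.IsMatching μP)
    (hcu : ∀ i, μP i ≠ some cu) : I.IsMatching (fillUnreserved I cu order μP) := by
  intro c
  by_cases hc : c = cu
  · subst hc
    refine card_le_of_forall_card_filter_and_lt_lt (p := fun j => μP j = none)
      (fun i _ j _ hij => (List.idxOf_inj (hmem i)).1 hij) fun i hi => ?_
    simp only [mem_filter, mem_univ, true_and] at hi
    exact (fillUnreserved_eq_some_cu_iff hcu).1 hi
  · simpa only [fillUnreserved_eq_some_iff hc] using hμP c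

lemma beneCount_fillUnreserved (hcu : ∀ i, μP i ≠ some cu) :
    beneCount cu (fillUnreserved I cu order μP) = msize μP := by
  unfold beneCount msize
  congr 1
  ext i
  simp only [mem_filter, mem_univ, true_and]
  rcases h : μP i with _ | c
  · rcases fillUnreserved_of_none (I := I) (cu := cu) (order := order) h with h' | h' <;>
      simp [h']
  · have hc : c ≠ cu := fun hc => hcu i (h.trans (congrArg some hc))
    simp [fillUnreserved_of_some h, hc]

end Fill

theorem rr_then_unreserved_max_beneficiary_general (I : Inst N C) (cu : C) (order : List N)
    (hb : IsBaseline order) (hcuE : ∀ i : N, I.Eligible i cu)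
    (μP : N → Option C)
    (hμP : PMatch1 I cu (rrRej1 I cu order) μP ∧ msize μP = ms1 I cu (rrRej1 I cu order)) :
    I.IsMatching (fillUnreserved I cu order μP) ∧
      Complies I (fillUnreserved I cu order μP) ∧
      ∀ ν : N → Option C, I.IsMatching ν → Complies I ν →
        beneCount cu ν ≤ beneCount cu (fillUnreserved I cu order μP) := by
  obtain ⟨hmatch, hsize⟩ := hμP
  refine ⟨isMatching_fillUnreserved hb.2 hmatch.1 hmatch.ne_cu,
    complies_fillUnreserved hcuE hmatch.complies, fun ν hν hνc => ?_⟩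
  calc beneCount cu ν ≤ ms1 I cu ∅ := beneCount_le_ms1 hν hνc
    _ = ms1 I cu (rrRej1 I cu order) := (ms1_rrRej1 I cu order).symm
    _ = beneCount cu (fillUnreserved I cu order μP) := by
      rw [beneCount_fillUnreserved hmatch.ne_cu, hsize]

/-- Applying the RR rule to the preferential categories only, and then
allocating the unreserved units among the unmatched agents in order of the baseline ordering
from highest priority, yields a maximum beneficiary assignment: the resulting matching is a
matching complying with the eligibility requirements that maximizes the number of agents
matched to preferential categories among all such matchings. -/
theorem rr_then_unreserved_max_beneficiary (I : Inst N C) (cu : C) (order : List N)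
    (hb : IsBaseline order) (hcuE : ∀ i : N, I.Eligible i cu)
    (hcuP : ∀ i j : N, I.Strict cu (some i) (some j) ↔ order.idxOf i < order.idxOf j)
    (μP : N → Option C)
    (hμP : PMatch1 I cu (rrRej1 I cu order) μP ∧ msize μP = ms1 I cu (rrRej1 I cu order)) :
    I.IsMatching (fillUnreserved I cu order μP) ∧
      Complies I (fillUnreserved I cu order μP) ∧
      ∀ ν : N → Option C, I.IsMatching ν → Complies I ν →
        beneCount cu ν ≤ beneCount cu (fillUnreserved I cu order μP) :=
  rr_then_unreserved_max_beneficiary_general I cu order hb hcuE μP hμP
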